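/- arXiv:2201.05252 — 6 statements merged into one kernel-verified Lean document; each statement's English description precedes it below -/
import Mathlib

section
/- Let G be a graph and S ⊆ V(G). Then S is a redundant open-locating-dominating (RED:OLD) set of G if and only if (1) every vertex v ∈ V(G) has at least two neighbors in S, and (2) every pair of distinct vertices u, v ∈ V(G) satisfies |(N(u) ∩ S) △ (N(v) ∩ S)| ≥ 2. -/
open scoped symmDiff

/-- `S` is an open-locating-dominating (OLD) set of `G`. -/
def SimpleGraph.IsOLDSet {V : Type*} (G : SimpleGraph V) (S : Set V) : Prop :=
  (∀ v : V, ∃ w ∈ S, G.Adj v w) ∧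
  ∀ u v : V, u ≠ v → G.neighborSet u ∩ S ≠ G.neighborSet v ∩ S

/-- `S` is a redundant OLD set of `G`: an open dominating set such that
`S \ {v}` is an OLD set for every `v ∈ S`. -/
def SimpleGraph.IsREDOLDSet {V : Type*} (G : SimpleGraph V) (S : Set V) : Prop :=
  (∀ v : V, ∃ w ∈ S, G.Adj v w) ∧ ∀ v ∈ S, G.IsOLDSet (S \ {v})

private lemma two_le_encard_of_pair {α : Type*} {s : Set α} {a b : α}
    (ha : a ∈ s) (hb : b ∈ s) (hab : a ≠ b) : 2 ≤ s.encard := by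
  rw [← Set.encard_pair hab]
  exact Set.encard_mono (Set.pair_subset ha hb)

private lemma nontrivial_of_two_le_encard {α : Type*} {s : Set α}
    (h : 2 ≤ s.encard) : s.Nontrivial := by
  obtain ⟨a, b, ha, hb, hab⟩ := Set.one_lt_encard_iff.mp (lt_of_lt_of_le (by norm_num : (1:ℕ∞) < 2) h)
  exact ⟨a, ha, b, hb, hab⟩

/-- A set `S` is a RED:OLD set iff every vertex is open-dominated at least twice
by `S` and every pair of distinct vertices is 2-distinguished by `S`. -/
theorem isREDOLDSet_iff {V : Type*} (G : SimpleGraph V) (S : Set V) :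
    G.IsREDOLDSet S ↔
      (∀ v : V, 2 ≤ (G.neighborSet v ∩ S).encard) ∧
      ∀ u v : V, u ≠ v →
        2 ≤ ((G.neighborSet u ∩ S) ∆ (G.neighborSet v ∩ S)).encard := by
  constructor
  · rintro ⟨hdom, hred⟩
    have key : ∀ (u v : V), u ≠ v → ∀ w ∈ S,
        ∃ y, y ∈ (G.neighborSet u ∩ S) ∆ (G.neighborSet v ∩ S) ∧ y ≠ w ∧ y ∈ S := by
      intro u v huv w hw
      have h := (hred w hw).2 u v huv
      have hne : ((G.neighborSet u ∩ (S \ {w})) ∆ (G.neighborSet v ∩ (S \ {w}))).Nonempty := by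
        rwa [Set.symmDiff_nonempty]
      obtain ⟨y, hy⟩ := hne
      rw [Set.mem_symmDiff] at hy
      simp only [Set.mem_inter_iff, Set.mem_diff, Set.mem_singleton_iff,
        SimpleGraph.mem_neighborSet] at hy
      refine ⟨y, ?_, ?_, ?_⟩
      · rw [Set.mem_symmDiff]
        simp only [Set.mem_inter_iff, SimpleGraph.mem_neighborSet]
        tauto
      · tauto
      · tauto
    constructor
    · intro v
      obtain ⟨w, hwS, hadj⟩ := hdom v
      obtain ⟨w', hw'S, hadj'⟩ := (hred w hwS).1 v
      exact two_le_encard_of_pair ⟨hadj', hw'S.1⟩ ⟨hadj, hwS⟩ (fun h => hw'S.2 h)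
    · intro u v huv
      obtain ⟨w, hwS, -⟩ := hdom u
      obtain ⟨y, hy, hyw, hyS⟩ := key u v huv w hwS
      obtain ⟨z, hz, hzy, hzS⟩ := key u v huv y hyS
      exact two_le_encard_of_pair hz hy hzy
  · rintro ⟨h1, h2⟩
    have hdom : ∀ v : V, ∃ w ∈ S, G.Adj v w := by
      intro v
      obtain ⟨a, ha, -, -, -⟩ := nontrivial_of_two_le_encard (h1 v)
      exact ⟨a, ha.2, ha.1⟩
    refine ⟨hdom, fun v hv => ⟨?_, ?_⟩⟩
    · intro u
      obtain ⟨a, ha, b, hb, hab⟩ := nontrivial_of_two_le_encard (h1 u)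
      by_cases hav : a = v
      · subst hav
        exact ⟨b, ⟨hb.2, fun h => hab (by simpa using h.symm)⟩, hb.1⟩
      · exact ⟨a, ⟨ha.2, hav⟩, ha.1⟩
    · intro u w huw heq
      obtain ⟨a, ha, b, hb, hab⟩ := nontrivial_of_two_le_encard (h2 u w huw)
      have hex : ∃ y ∈ (G.neighborSet u ∩ S) ∆ (G.neighborSet w ∩ S), y ≠ v := by
        by_cases hav : a = v
        · exact ⟨b, hb, fun h => hab (by rw [h, hav])⟩
        · exact ⟨a, ha, hav⟩
      obtain ⟨y, hy, hyv⟩ := hex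
      rw [Set.mem_symmDiff] at hy
      have hm := Set.ext_iff.mp heq y
      simp only [Set.mem_inter_iff, Set.mem_diff, Set.mem_singleton_iff] at hm hy
      tauto
end

section
/- Let G be a graph and let u, v, w be three vertices forming a triangle (pairwise adjacent) such that u and v each have degree exactly 2 in G (their only neighbors being the other two triangle vertices). Then every RED:OLD set of G contains all three vertices u, v, w. -/
open scoped symmDiff

/-- `S` is a redundant OLD set of `G` (characterization): every vertex is
open-dominated at least twice and every pair of distinct vertices is
2-distinguished by `S`. -/
def SimpleGraph.IsREDOLDSet' {V : Type*} (G : SimpleGraph V) (S : Set V) : Prop :=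
  (∀ v : V, 2 ≤ (G.neighborSet v ∩ S).encard) ∧
  ∀ u v : V, u ≠ v →
    2 ≤ ((G.neighborSet u ∩ S) ∆ (G.neighborSet v ∩ S)).encard

theorem Set.eq_pair_of_subset_of_two_le_encard {α : Type*} {s : Set α} {a b : α}
    (hs : s ⊆ {a, b}) (h2 : 2 ≤ s.encard) : s = {a, b} := by
  have hpair : ({a, b} : Set α).encard ≤ 2 :=
    (Set.encard_insert_le _ _).trans (by rw [Set.encard_singleton]; norm_num)
  exact ((Set.finite_singleton b).insert a).eq_of_subset_of_encard_le' hs (hpair.trans h2)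

theorem SimpleGraph.IsREDOLDSet'.pair_subset_of_neighborSet_eq {V : Type*} {G : SimpleGraph V}
    {S : Set V} (hS : G.IsREDOLDSet' S) {x a b : V} (hx : G.neighborSet x = {a, b}) :
    a ∈ S ∧ b ∈ S := by
  have hdom : G.neighborSet x ∩ S = {a, b} :=
    Set.eq_pair_of_subset_of_two_le_encard (hx ▸ Set.inter_subset_left) (hS.1 x)
  exact Set.pair_subset_iff.1 (hdom ▸ Set.inter_subset_right)

theorem triangle_subset_redold_general {V : Type*} (G : SimpleGraph V) (u v w : V)
    (hu : G.neighborSet u = {v, w}) (hv : G.neighborSet v = {u, w})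
    (S : Set V) (hS : G.IsREDOLDSet' S) :
    u ∈ S ∧ v ∈ S ∧ w ∈ S := by
  obtain ⟨hvS, hwS⟩ := hS.pair_subset_of_neighborSet_eq hu
  exact ⟨(hS.pair_subset_of_neighborSet_eq hv).1, hvS, hwS⟩

/-- If `u, v, w` form a triangle and `u`, `v` have degree exactly 2 (their only
neighbors being the other two triangle vertices), then every RED:OLD set
contains `u`, `v` and `w`. -/
theorem triangle_subset_redold {V : Type*} (G : SimpleGraph V) (u v w : V)
    (huv : G.Adj u v) (huw : G.Adj u w) (hvw : G.Adj v w)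
    (hu : G.neighborSet u = {v, w}) (hv : G.neighborSet v = {u, w})
    (S : Set V) (hS : G.IsREDOLDSet' S) :
    u ∈ S ∧ v ∈ S ∧ w ∈ S :=
  triangle_subset_redold_general G u v w hu hv S hS
end

section
/- Let G₁₁ be the graph on vertices v₁,…,v₁₁ consisting of three triangles {v₁,v₂,v₃}, {v₅,v₆,v₇}, {v₉,v₁₀,v₁₁} together with edges v₃v₄, v₄v₅, v₇v₈, v₈v₉. Then S = {v₁,v₂,v₃,v₅,v₆,v₇,v₉,v₁₀,v₁₁} is a RED:OLD set of G₁₁, it is the unique minimum RED:OLD set, and RED:OLD(G₁₁) = 9. -/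
open scoped symmDiff

/-- The graph `G₁₁` (0-indexed on `Fin 11`). -/
def G11 : SimpleGraph (Fin 11) :=
  SimpleGraph.fromRel (fun a b =>
    (a, b) ∈ ([(0,1),(0,2),(1,2),(2,3),(3,4),(4,5),(4,6),(5,6),(6,7),(7,8),
               (8,9),(8,10),(9,10)] : List (Fin 11 × Fin 11)))

instance G11.adjDecidable : DecidableRel G11.Adj := fun a b =>
  decidable_of_iff _ (SimpleGraph.fromRel_adj _ a b).symm

/-- compute a neighborhood -/
lemma nbhd_eq (v : Fin 11) (s : Set (Fin 11)) [DecidablePred (· ∈ s)]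
    (h : ∀ x, G11.Adj v x ↔ x ∈ s) : G11.neighborSet v = s :=
  Set.ext h

lemma nb0 : G11.neighborSet 0 = {1, 2} := by
  ext x; simp only [SimpleGraph.mem_neighborSet, Set.mem_insert_iff, Set.mem_singleton_iff]
  revert x; decide

lemma nb1 : G11.neighborSet 1 = {0, 2} := by
  ext x; simp only [SimpleGraph.mem_neighborSet, Set.mem_insert_iff, Set.mem_singleton_iff]
  revert x; decide

lemma nb4 : G11.neighborSet 4 = {3, 5, 6} := by
  ext x; simp only [SimpleGraph.mem_neighborSet, Set.mem_insert_iff, Set.mem_singleton_iff]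
  revert x; decide

lemma nb5 : G11.neighborSet 5 = {4, 6} := by
  ext x; simp only [SimpleGraph.mem_neighborSet, Set.mem_insert_iff, Set.mem_singleton_iff]
  revert x; decide

lemma nb6 : G11.neighborSet 6 = {4, 5, 7} := by
  ext x; simp only [SimpleGraph.mem_neighborSet, Set.mem_insert_iff, Set.mem_singleton_iff]
  revert x; decide

lemma nb9 : G11.neighborSet 9 = {8, 10} := by
  ext x; simp only [SimpleGraph.mem_neighborSet, Set.mem_insert_iff, Set.mem_singleton_iff]
  revert x; decide

lemma nb10 : G11.neighborSet 10 = {8, 9} := by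
  ext x; simp only [SimpleGraph.mem_neighborSet, Set.mem_insert_iff, Set.mem_singleton_iff]
  revert x; decide

/-- if both of a 2-element neighborhood, minus one vertex, can't dominate -/
lemma pair_mem {T : Set (Fin 11)} {a b : Fin 11}
    (h : 2 ≤ (({a, b} : Set (Fin 11)) ∩ T).encard) : a ∈ T ∧ b ∈ T := by
  constructor
  · by_contra ha
    have hsub : ({a, b} : Set (Fin 11)) ∩ T ⊆ {b} := by
      rintro x ⟨hx1 | hx1, hx2⟩ <;> simp_all
    have := (Set.encard_mono hsub).trans_eq (Set.encard_singleton b)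
    exact absurd (h.trans this) (by norm_num)
  · by_contra hb
    have hsub : ({a, b} : Set (Fin 11)) ∩ T ⊆ {a} := by
      rintro x ⟨hx1 | hx1, hx2⟩ <;> simp_all
    have := (Set.encard_mono hsub).trans_eq (Set.encard_singleton a)
    exact absurd (h.trans this) (by norm_num)

/-- from a 3-element neighborhood with one known member: one of the other two is in T -/
lemma triple_mem_b {T : Set (Fin 11)} {a b c : Fin 11}
    (h : 2 ≤ (({a, b, c} : Set (Fin 11)) ∩ T).encard)
    (hnb : b ∉ T) : a ∈ T ∧ c ∈ T := by
  constructor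
  · by_contra ha
    have hsub : ({a, b, c} : Set (Fin 11)) ∩ T ⊆ {c} := by
      rintro x ⟨hx1 | hx1 | hx1, hx2⟩ <;> simp_all
    have := (Set.encard_mono hsub).trans_eq (Set.encard_singleton c)
    exact absurd (h.trans this) (by norm_num)
  · by_contra hc
    have hsub : ({a, b, c} : Set (Fin 11)) ∩ T ⊆ {a} := by
      rintro x ⟨hx1 | hx1 | hx1, hx2⟩ <;> simp_all
    have := (Set.encard_mono hsub).trans_eq (Set.encard_singleton a)
    exact absurd (h.trans this) (by norm_num)

lemma triple_mem2 {T : Set (Fin 11)} {a b c : Fin 11}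
    (h : 2 ≤ (({a, b, c} : Set (Fin 11)) ∩ T).encard)
    (hna : a ∉ T) : b ∈ T ∧ c ∈ T := by
  constructor
  · by_contra hb
    have hsub : ({a, b, c} : Set (Fin 11)) ∩ T ⊆ {c} := by
      rintro x ⟨hx1 | hx1 | hx1, hx2⟩ <;> simp_all
    have := (Set.encard_mono hsub).trans_eq (Set.encard_singleton c)
    exact absurd (h.trans this) (by norm_num)
  · by_contra hc
    have hsub : ({a, b, c} : Set (Fin 11)) ∩ T ⊆ {b} := by
      rintro x ⟨hx1 | hx1 | hx1, hx2⟩ <;> simp_all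
    have := (Set.encard_mono hsub).trans_eq (Set.encard_singleton b)
    exact absurd (h.trans this) (by norm_num)

/-- The nine triangle vertices form a RED:OLD set of `G₁₁`, every RED:OLD set of
`G₁₁` has at least 9 vertices, and it is the unique minimum RED:OLD set; thus
`RED:OLD(G₁₁) = 9`. -/
theorem redold_G11 :
    G11.IsREDOLDSet' ({0, 1, 2, 4, 5, 6, 8, 9, 10} : Set (Fin 11)) ∧
    (∀ T : Set (Fin 11), G11.IsREDOLDSet' T → 9 ≤ T.ncard) ∧
    (∀ T : Set (Fin 11), G11.IsREDOLDSet' T → T.ncard = 9 →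
      T = ({0, 1, 2, 4, 5, 6, 8, 9, 10} : Set (Fin 11))) := by
  have hstar : ({0, 1, 2, 4, 5, 6, 8, 9, 10} : Set (Fin 11)) =
      ↑({0, 1, 2, 4, 5, 6, 8, 9, 10} : Finset (Fin 11)) := by simp
  have hcard9 : ({0, 1, 2, 4, 5, 6, 8, 9, 10} : Set (Fin 11)).ncard = 9 := by
    rw [hstar, Set.ncard_coe_finset]; decide
  -- forced membership from domination
  have forced : ∀ T : Set (Fin 11), G11.IsREDOLDSet' T →
      (({0, 1, 2, 4, 5, 6, 8, 9, 10} : Set (Fin 11)) ⊆ T ∨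
       ({0, 1, 2, 3, 4, 6, 7, 8, 9, 10} : Set (Fin 11)) ⊆ T) := by
    intro T hT
    have h1 := hT.1
    have f0 := pair_mem (nb0 ▸ h1 0)
    have f1 := pair_mem (nb1 ▸ h1 1)
    have f5 := pair_mem (nb5 ▸ h1 5)
    have f9 := pair_mem (nb9 ▸ h1 9)
    have f10 := pair_mem (nb10 ▸ h1 10)
    by_cases h5 : (5 : Fin 11) ∈ T
    · left
      intro x hx
      simp only [Set.mem_insert_iff, Set.mem_singleton_iff] at hx
      rcases hx with rfl | rfl | rfl | rfl | rfl | rfl | rfl | rfl | rfl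
      exacts [f1.1, f0.1, f0.2, f5.1, h5, f5.2, f9.1, f10.2, f9.2]
    · have f4 := triple_mem_b (nb4 ▸ h1 4) h5
      have f6 := triple_mem_b (nb6 ▸ h1 6) h5
      right
      intro x hx
      simp only [Set.mem_insert_iff, Set.mem_singleton_iff] at hx
      rcases hx with rfl | rfl | rfl | rfl | rfl | rfl | rfl | rfl | rfl | rfl
      exacts [f1.1, f0.1, f0.2, f4.1, f5.1, f5.2, f6.2, f9.1, f10.2, f9.2]
  have hcard10 : ({0, 1, 2, 3, 4, 6, 7, 8, 9, 10} : Set (Fin 11)).ncard = 10 := by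
    rw [show ({0, 1, 2, 3, 4, 6, 7, 8, 9, 10} : Set (Fin 11)) =
      ↑({0, 1, 2, 3, 4, 6, 7, 8, 9, 10} : Finset (Fin 11)) by simp, Set.ncard_coe_finset]
    decide
  refine ⟨?_, fun T hT => ?_, fun T hT hc => ?_⟩
  · constructor
    · intro v
      fin_cases v <;>
        · rw [show G11.neighborSet _ ∩ _ = ↑((G11.neighborFinset _) ∩
            ({0, 1, 2, 4, 5, 6, 8, 9, 10} : Finset (Fin 11))) by
              rw [Finset.coe_inter, SimpleGraph.neighborFinset_def, Set.coe_toFinset, hstar],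
            Set.encard_coe_eq_coe_finsetCard]
          exact_mod_cast by decide
    · intro u v huv
      have hco : ∀ w : Fin 11, G11.neighborSet w ∩ ({0, 1, 2, 4, 5, 6, 8, 9, 10} : Set (Fin 11))
          = ↑((G11.neighborFinset w) ∩ ({0, 1, 2, 4, 5, 6, 8, 9, 10} : Finset (Fin 11))) := by
        intro w
        rw [Finset.coe_inter, SimpleGraph.neighborFinset_def, Set.coe_toFinset, hstar]
      rw [hco, hco, ← Finset.coe_symmDiff, Set.encard_coe_eq_coe_finsetCard]
      have : ∀ u v : Fin 11, u ≠ v → 2 ≤ (((G11.neighborFinset u) ∩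
          ({0, 1, 2, 4, 5, 6, 8, 9, 10} : Finset (Fin 11))) ∆ ((G11.neighborFinset v) ∩
          ({0, 1, 2, 4, 5, 6, 8, 9, 10} : Finset (Fin 11)))).card := by decide
      exact_mod_cast this u v huv
  · rcases forced T hT with h | h
    · calc (9 : ℕ) = _ := hcard9.symm
        _ ≤ T.ncard := Set.ncard_le_ncard h T.toFinite
    · calc (9 : ℕ) ≤ 10 := by norm_num
        _ = _ := hcard10.symm
        _ ≤ T.ncard := Set.ncard_le_ncard h T.toFinite
  · rcases forced T hT with h | h
    · exact (Set.eq_of_subset_of_ncard_le h (by rw [hc, hcard9]) T.toFinite).symm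
    · have : 10 ≤ T.ncard := hcard10 ▸ Set.ncard_le_ncard h T.toFinite
      omega
end

section
/- In the infinite square grid SQ (vertex set ℤ², adjacency given by ℓ₁-distance 1), every RED:OLD set has density at least 1/2; more precisely, for every RED:OLD set S and every n, |S ∩ [−n,n]²| / (2n+1)² ≥ 1/2 − o(1) as n → ∞. Consequently RED:OLD%(SQ) = 1/2. -/
open scoped symmDiff

/-- The infinite square grid: vertex set `ℤ × ℤ`, with adjacency given by
`ℓ₁`-distance 1. -/
def SQ : SimpleGraph (ℤ × ℤ) where
  Adj p q := |p.1 - q.1| + |p.2 - q.2| = 1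
  symm := by
    constructor
    intro p q h
    simpa [abs_sub_comm] using h
  loopless := by
    constructor
    intro p h
    simp at h

/-- The density of `S` in the square grid: `lim inf` of the proportion of `S`
inside the box `[-n, n]²`. -/
noncomputable def gridDensity (S : Set (ℤ × ℤ)) : ℝ :=
  Filter.liminf
    (fun n : ℕ =>
      ((S ∩ {p : ℤ × ℤ | |p.1| ≤ (n : ℤ) ∧ |p.2| ≤ (n : ℤ)}).ncard : ℝ) /
        ((2 * n + 1) ^ 2 : ℝ))
    Filter.atTop

/-! Every vertex has at least two neighbours in `S`, and a vertex of `S` is a neighbour of only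
four vertices, so double counting the adjacent pairs `(v, s)` with `v` in the box of radius `n` and
`s ∈ S` gives `2 (2n+1)² ≤ 4 |S ∩ box (n+1)|`, i.e. box proportions at least `1/2 - O(1/n)`.

The even columns attain `1/2`: every vertex has exactly two neighbours there, placed
symmetrically about it (vertically in an even column, horizontally in an odd one), so the
vertex is the midpoint of its trace; and two distinct `2`-sets differ in at least two elements. -/

open Filter Finset Topology

theorem Set.two_le_encard_symmDiff {α : Type*} {A B : Set α} (hA : A.encard = 2)
    (hB : B.encard = 2) (hAB : A ≠ B) : 2 ≤ (A ∆ B).encard := by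
  have hA_fin : A.Finite := Set.finite_of_encard_eq_coe hA
  have hB_fin : B.Finite := Set.finite_of_encard_eq_coe hB
  have hAB' : (A \ B).Nonempty := Set.nonempty_of_not_subset fun h ↦
    hAB (hA_fin.eq_of_subset_of_encard_le h (by rw [hA, hB]))
  have hBA : (B \ A).Nonempty := Set.nonempty_of_not_subset fun h ↦
    hAB (hB_fin.eq_of_subset_of_encard_le h (by rw [hA, hB])).symm
  rw [Set.symmDiff_def, Set.encard_union_eq disjoint_sdiff_sdiff]
  exact add_le_add (Set.one_le_encard_iff_nonempty.2 hAB') (Set.one_le_encard_iff_nonempty.2 hBA)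

theorem eq_of_pair_sub_add_eq_pair_sub_add {G : Type*} [AddCommGroup G] [IsAddTorsionFree G]
    {u v d e : G} (h : ({u - d, u + d} : Set G) = {v - e, v + e}) : u = v := by
  have hsum : (u - d) + (u + d) = (v - e) + (v + e) := by
    rcases Set.pair_eq_pair_iff.1 h with ⟨h₁, h₂⟩ | ⟨h₁, h₂⟩
    · rw [h₁, h₂]
    · rw [h₁, h₂, add_comm]
  rw [← nsmul_right_inj two_ne_zero]
  simpa [two_nsmul] using hsum

def gridNeighbors (p : ℤ × ℤ) : Finset (ℤ × ℤ) :=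
  {(p.1 + 1, p.2), (p.1 - 1, p.2), (p.1, p.2 + 1), (p.1, p.2 - 1)}

theorem SQ_adj_iff {p q : ℤ × ℤ} : SQ.Adj p q ↔ q ∈ gridNeighbors p := by
  change |p.1 - q.1| + |p.2 - q.2| = 1 ↔ _
  simp only [gridNeighbors, mem_insert, mem_singleton, Prod.ext_iff]
  rcases abs_cases (p.1 - q.1) with ⟨h₁, h₁'⟩ | ⟨h₁, h₁'⟩ <;>
    rcases abs_cases (p.2 - q.2) with ⟨h₂, h₂'⟩ | ⟨h₂, h₂'⟩ <;> omega

theorem card_gridNeighbors_le (p : ℤ × ℤ) : #(gridNeighbors p) ≤ 4 := card_le_four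

noncomputable def gridBox (n : ℕ) : Finset (ℤ × ℤ) := Icc (-(n : ℤ)) n ×ˢ Icc (-(n : ℤ)) n

theorem mem_gridBox {n : ℕ} {p : ℤ × ℤ} : p ∈ gridBox n ↔ |p.1| ≤ n ∧ |p.2| ≤ n := by
  simp [gridBox, abs_le]

theorem card_gridBox (n : ℕ) : #(gridBox n) = (2 * n + 1) ^ 2 := by
  rw [gridBox, card_product, Int.card_Icc, sq]
  congr <;> omega

theorem mem_gridBox_succ_of_adj {n : ℕ} {v p : ℤ × ℤ} (hv : v ∈ gridBox n) (hvp : SQ.Adj v p) :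
    p ∈ gridBox (n + 1) := by
  rw [SQ_adj_iff, gridNeighbors] at hvp
  simp only [mem_gridBox, abs_le, mem_insert, mem_singleton, Prod.ext_iff] at hv hvp ⊢
  push_cast
  omega

noncomputable def boxRatio (S : Set (ℤ × ℤ)) (n : ℕ) : ℝ :=
  ((S ∩ {p : ℤ × ℤ | |p.1| ≤ (n : ℤ) ∧ |p.2| ≤ (n : ℤ)}).ncard : ℝ) / ((2 * n + 1) ^ 2 : ℝ)

theorem gridDensity_eq_liminf_boxRatio (S : Set (ℤ × ℤ)) :
    gridDensity S = liminf (boxRatio S) atTop := rfl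

open Classical in
theorem boxRatio_eq (S : Set (ℤ × ℤ)) (n : ℕ) :
    boxRatio S n = #{p ∈ gridBox n | p ∈ S} / #(gridBox n) := by
  rw [boxRatio, card_gridBox, ← Set.ncard_coe_finset, coe_filter]
  push_cast
  congr 3
  ext p
  simp only [Set.mem_inter_iff, Set.mem_ofPred_eq, mem_gridBox]
  tauto

section Lower

variable {S : Set (ℤ × ℤ)}

open Classical in
theorem card_gridBox_le_two_mul_card (hS : ∀ v, 2 ≤ (SQ.neighborSet v ∩ S).encard) (n : ℕ) :
    #(gridBox n) ≤ 2 * #{p ∈ gridBox (n + 1) | p ∈ S} := by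
  set A := {p ∈ gridBox (n + 1) | p ∈ S}
  have hdom : ∀ v ∈ gridBox n, 2 ≤ #(A.bipartiteAbove SQ.Adj v) := by
    intro v hv
    have hsub : SQ.neighborSet v ∩ S ⊆ ↑(A.bipartiteAbove SQ.Adj v) := fun p ⟨hvp, hpS⟩ ↦ by
      simpa [bipartiteAbove, A, mem_gridBox_succ_of_adj hv hvp, hpS] using hvp
    exact_mod_cast (hS v).trans
      ((Set.encard_le_encard hsub).trans_eq (Set.encard_coe_eq_coe_finsetCard _))
  have hdeg : ∀ p ∈ A, #((gridBox n).bipartiteBelow SQ.Adj p) ≤ 4 := fun p _ ↦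
    (card_le_card fun v hv ↦ SQ_adj_iff.1 (SQ.adj_symm (mem_filter.1 hv).2)).trans
      (card_gridNeighbors_le p)
  have := card_mul_le_card_mul SQ.Adj hdom hdeg
  omega

theorem half_sub_le_boxRatio (hS : ∀ v, 2 ≤ (SQ.neighborSet v ∩ S).encard) (n : ℕ) :
    1 / 2 - 2 / (2 * n + 1) ≤ boxRatio S n := by
  classical
  rcases n with _ | m
  · have : 0 ≤ boxRatio S 0 := by rw [boxRatio_eq]; positivity
    norm_num
    linarith
  · have h : ((2 * m + 1) ^ 2 : ℝ) ≤ 2 * #{p ∈ gridBox (m + 1) | p ∈ S} := by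
      exact_mod_cast card_gridBox m ▸ card_gridBox_le_two_mul_card hS m
    rw [boxRatio_eq, card_gridBox, le_div_iff₀ (by positivity)]
    push_cast
    field_simp
    nlinarith

theorem tendsto_two_div_two_mul_add_one :
    Tendsto (fun n : ℕ ↦ 2 / (2 * n + 1 : ℝ)) atTop (𝓝 0) :=
  tendsto_const_nhds.div_atTop <| tendsto_atTop_add_const_right _ _ <|
    tendsto_natCast_atTop_atTop.const_mul_atTop two_pos

theorem eventually_half_sub_le_boxRatio (hS : ∀ v, 2 ≤ (SQ.neighborSet v ∩ S).encard)
    {ε : ℝ} (hε : 0 < ε) : ∀ᶠ n in atTop, 1 / 2 - ε ≤ boxRatio S n := by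
  filter_upwards [tendsto_two_div_two_mul_add_one.eventually (ge_mem_nhds hε)] with n hn
  linarith [half_sub_le_boxRatio hS n]

theorem boxRatio_le_one (S : Set (ℤ × ℤ)) (n : ℕ) : boxRatio S n ≤ 1 := by
  classical
  rw [boxRatio_eq]
  exact div_le_one_of_le₀ (mod_cast card_filter_le _ _) (Nat.cast_nonneg _)

theorem half_le_gridDensity (hS : ∀ v, 2 ≤ (SQ.neighborSet v ∩ S).encard) :
    1 / 2 ≤ gridDensity S :=
  le_of_forall_sub_le fun _ hε ↦ le_liminf_of_le
    (isCoboundedUnder_ge_of_le atTop (boxRatio_le_one S)) (eventually_half_sub_le_boxRatio hS hε)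

end Lower

section EvenColumns

def evenColumns : Set (ℤ × ℤ) := {p | Even p.1}

def evenColumnsDir (v : ℤ × ℤ) : ℤ × ℤ := if Even v.1 then (0, 1) else (1, 0)

theorem neighborSet_inter_evenColumns (v : ℤ × ℤ) :
    SQ.neighborSet v ∩ evenColumns = {v - evenColumnsDir v, v + evenColumnsDir v} := by
  ext p
  simp only [Set.mem_inter_iff, SimpleGraph.mem_neighborSet, SQ_adj_iff, gridNeighbors,
    evenColumns, evenColumnsDir, Set.mem_ofPred_eq, Set.mem_insert_iff, Set.mem_singleton_iff,
    mem_insert, mem_singleton, Int.even_iff]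
  split_ifs <;> simp only [Prod.ext_iff, Prod.fst_sub, Prod.snd_sub, Prod.fst_add, Prod.snd_add] <;>
    omega

theorem encard_neighborSet_inter_evenColumns (v : ℤ × ℤ) :
    (SQ.neighborSet v ∩ evenColumns).encard = 2 := by
  rw [neighborSet_inter_evenColumns, Set.encard_pair]
  unfold evenColumnsDir
  split_ifs <;> simp [Prod.ext_iff] <;> omega

theorem isREDOLDSet'_evenColumns : SQ.IsREDOLDSet' evenColumns := by
  refine ⟨fun v ↦ (encard_neighborSet_inter_evenColumns v).ge, fun u v huv ↦ ?_⟩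
  refine Set.two_le_encard_symmDiff (encard_neighborSet_inter_evenColumns u)
    (encard_neighborSet_inter_evenColumns v) fun h ↦ huv ?_
  rw [neighborSet_inter_evenColumns, neighborSet_inter_evenColumns] at h
  exact eq_of_pair_sub_add_eq_pair_sub_add h

theorem card_filter_even_Icc_neg_le (n : ℕ) : #{x ∈ Icc (-(n : ℤ)) n | Even x} ≤ n + 1 := by
  have hmaps : Set.MapsTo (fun x : ℤ ↦ x / 2) ↑{x ∈ Icc (-(n : ℤ)) n | Even x} ↑(Icc (-(n / 2 : ℤ)) (n / 2)) := by
    intro x hx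
    simp only [coe_filter, mem_Icc, Set.mem_ofPred_eq, coe_Icc, Set.mem_Icc, Int.even_iff] at hx ⊢
    omega
  have hinj : Set.InjOn (fun x : ℤ ↦ x / 2) ↑{x ∈ Icc (-(n : ℤ)) n | Even x} := by
    intro x hx y hy hxy
    simp only [coe_filter, mem_Icc, Set.mem_ofPred_eq, Int.even_iff] at hx hy hxy
    omega
  have := card_le_card_of_injOn _ hmaps hinj
  rw [Int.card_Icc] at this
  omega

open Classical in
theorem card_gridBox_filter_evenColumns_le (n : ℕ) :
    #{p ∈ gridBox n | p ∈ evenColumns} ≤ (n + 1) * (2 * n + 1) := by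
  rw [gridBox, evenColumns]
  simp only [Set.mem_ofPred_eq]
  rw [filter_product_left, card_product, Int.card_Icc]
  exact Nat.mul_le_mul (card_filter_even_Icc_neg_le n) (by omega)

theorem boxRatio_evenColumns_le (n : ℕ) : boxRatio evenColumns n ≤ 1 / 2 + 2 / (2 * n + 1) := by
  classical
  have h : (#{p ∈ gridBox n | p ∈ evenColumns} : ℝ) ≤ (n + 1) * (2 * n + 1) := by
    exact_mod_cast card_gridBox_filter_evenColumns_le n
  rw [boxRatio_eq, card_gridBox, div_le_iff₀ (by positivity)]
  push_cast
  field_simp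
  nlinarith

theorem gridDensity_evenColumns : gridDensity evenColumns = 1 / 2 := by
  have hlim : Tendsto (boxRatio evenColumns) atTop (𝓝 (1 / 2)) := by
    have h := tendsto_two_div_two_mul_add_one
    refine tendsto_of_tendsto_of_tendsto_of_le_of_le (by simpa using h.const_sub (1 / 2 : ℝ))
      (by simpa using h.const_add (1 / 2 : ℝ))
      (half_sub_le_boxRatio fun v ↦ (encard_neighborSet_inter_evenColumns v).ge)
      boxRatio_evenColumns_le
  rw [gridDensity_eq_liminf_boxRatio, hlim.liminf_eq]

end EvenColumns

/-- Every RED:OLD set of the infinite square grid has density at least `1/2`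
(its box-proportions are eventually at least `1/2 - ε` for every `ε > 0`), and
consequently `RED:OLD%(SQ) = 1/2`: `1/2` is the least achievable density. -/
theorem sq_redold_density :
    (∀ S : Set (ℤ × ℤ), SQ.IsREDOLDSet' S → ∀ ε : ℝ, 0 < ε → ∃ N : ℕ, ∀ n ≥ N,
      1 / 2 - ε ≤
        ((S ∩ {p : ℤ × ℤ | |p.1| ≤ (n : ℤ) ∧ |p.2| ≤ (n : ℤ)}).ncard : ℝ) /
          ((2 * n + 1) ^ 2 : ℝ)) ∧
    IsLeast {d : ℝ | ∃ S : Set (ℤ × ℤ), SQ.IsREDOLDSet' S ∧ gridDensity S = d}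
      (1 / 2) :=
  ⟨fun _ hS _ hε ↦ eventually_atTop.1 (eventually_half_sub_le_boxRatio hS.1 hε),
    ⟨evenColumns, isREDOLDSet'_evenColumns, gridDensity_evenColumns⟩,
    fun _ ⟨_, hS, hd⟩ ↦ hd ▸ half_le_gridDensity hS.1⟩
end

section
/- For the complete graph K_n with n ≥ 4, every RED:OLD set of K_n must contain all n vertices, and V(K_n) is a RED:OLD set; hence RED:OLD(K_n) = n for n ≥ 4. -/
open scoped symmDiff

lemma symm_diff_complete {V : Type*} (S : Set V) {u v : V} (huv : u ≠ v) :
    (({u}ᶜ ∩ S) ∆ ({v}ᶜ ∩ S)) = ({u, v} : Set V) ∩ S := by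
  ext x
  simp only [Set.mem_symmDiff, Set.mem_inter_iff, Set.mem_compl_iff, Set.mem_singleton_iff,
    Set.mem_insert_iff]
  have := huv.symm
  by_cases hxu : x = u <;> by_cases hxv : x = v <;> by_cases hxS : x ∈ S <;>
    simp_all

lemma exists_two_ne (n : ℕ) (hn : 4 ≤ n) (v : Fin n) :
    ∃ a b : Fin n, a ≠ b ∧ a ≠ v ∧ b ≠ v := by
  have h3 : 1 < (Finset.univ.erase v).card := by
    rw [Finset.card_erase_of_mem (Finset.mem_univ v), Finset.card_univ, Fintype.card_fin]
    omega
  obtain ⟨a, ha, b, hb, hab⟩ := Finset.one_lt_card.mp h3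
  exact ⟨a, b, hab, Finset.ne_of_mem_erase ha, Finset.ne_of_mem_erase hb⟩

lemma nbr_top {V : Type*} (v : V) : (⊤ : SimpleGraph V).neighborSet v = {v}ᶜ := by
  ext x; simp [SimpleGraph.neighborSet, eq_comm, ne_comm]

/-- For the complete graph `Kₙ` with `n ≥ 4`: the whole vertex set is a RED:OLD
set, every RED:OLD set is the whole vertex set, and `RED:OLD(Kₙ) = n`. -/
theorem redold_complete (n : ℕ) (hn : 4 ≤ n) :
    (⊤ : SimpleGraph (Fin n)).IsREDOLDSet' Set.univ ∧
    (∀ S : Set (Fin n), (⊤ : SimpleGraph (Fin n)).IsREDOLDSet' S →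
      S = Set.univ) ∧
    sInf {k : ℕ | ∃ S : Set (Fin n),
        (⊤ : SimpleGraph (Fin n)).IsREDOLDSet' S ∧ S.ncard = k} = n := by
  have huniv : (⊤ : SimpleGraph (Fin n)).IsREDOLDSet' Set.univ := by
    constructor
    · intro v
      obtain ⟨a, b, hab, hav, hbv⟩ := exists_two_ne n hn v
      have hsub : ({a, b} : Set (Fin n)) ⊆ (⊤ : SimpleGraph (Fin n)).neighborSet v ∩ Set.univ := by
        rw [nbr_top]
        rintro x (hx | hx) <;> subst hx <;> exact ⟨by simpa, trivial⟩
      calc (2 : ℕ∞) = ({a, b} : Set (Fin n)).encard := (Set.encard_pair hab).symm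
        _ ≤ _ := Set.encard_le_encard hsub
    · intro u v huv
      rw [nbr_top, nbr_top, symm_diff_complete _ huv, Set.inter_univ]
      rw [Set.encard_pair huv]
  have hall : ∀ S : Set (Fin n), (⊤ : SimpleGraph (Fin n)).IsREDOLDSet' S → S = Set.univ := by
    intro S hS
    ext v
    simp only [Set.mem_univ, iff_true]
    obtain ⟨a, b, hab, hav, hbv⟩ := exists_two_ne n hn v
    have h2 := hS.2 v a (Ne.symm hav)
    rw [nbr_top, nbr_top, symm_diff_complete S (Ne.symm hav)] at h2
    have hsub : ({v, a} : Set (Fin n)) ∩ S ⊆ {v, a} := Set.inter_subset_left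
    have heq : ({v, a} : Set (Fin n)) ∩ S = {v, a} := by
      apply (Set.toFinite _).eq_of_subset_of_encard_le hsub
      rwa [Set.encard_pair (Ne.symm hav)]
    have : v ∈ ({v, a} : Set (Fin n)) ∩ S := heq.symm ▸ Set.mem_insert v {a}
    exact this.2
  refine ⟨huniv, hall, ?_⟩
  have hset : {k : ℕ | ∃ S : Set (Fin n),
      (⊤ : SimpleGraph (Fin n)).IsREDOLDSet' S ∧ S.ncard = k} = {n} := by
    ext k
    simp only [Set.mem_setOf_eq, Set.mem_singleton_iff]
    constructor
    · rintro ⟨S, hS, rfl⟩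
      rw [hall S hS, Set.ncard_univ, Nat.card_eq_fintype_card, Fintype.card_fin]
    · rintro rfl
      exact ⟨Set.univ, huniv, by rw [Set.ncard_univ, Nat.card_eq_fintype_card, Fintype.card_fin]⟩
  rw [hset, csInf_singleton]
end

section
/- Let C_n be the cycle on n ≥ 5 vertices. Then the entire vertex set V(C_n) is a RED:OLD set of C_n: every vertex has exactly two neighbors in V(C_n), and every pair of distinct vertices u, v satisfies |N(u) △ N(v)| ≥ 2. -/
open scoped symmDiff

/-- The cycle `Cₙ` on the vertex set `ZMod n`. -/
def cycle (n : ℕ) : SimpleGraph (ZMod n) :=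
  SimpleGraph.fromRel (fun i j => i - j = 1)

/-- For the cycle `Cₙ` with `n ≥ 5`, the whole vertex set is a RED:OLD set:
every vertex has exactly two neighbors, and every pair of distinct vertices
`u, v` satisfies `|N(u) ∆ N(v)| ≥ 2`. -/
theorem redold_cycle_univ (n : ℕ) (hn : 5 ≤ n) :
    (∀ v : ZMod n, ((cycle n).neighborSet v).encard = 2) ∧
    (∀ u v : ZMod n, u ≠ v →
      2 ≤ ((cycle n).neighborSet u ∆ (cycle n).neighborSet v).encard) ∧
    (cycle n).IsREDOLDSet' Set.univ := by
  have hcast : ∀ k : ℕ, 0 < k → k < n → (k : ZMod n) ≠ 0 := by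
    intro k hk hkn h
    rw [ZMod.natCast_eq_zero_iff] at h
    exact absurd (Nat.le_of_dvd hk h) (by omega)
  have h1 : (1 : ZMod n) ≠ 0 := by
    have := hcast 1 (by omega) (by omega); simpa using this
  have h2 : (2 : ZMod n) ≠ 0 := by
    have := hcast 2 (by omega) (by omega); simpa using this
  have h4 : (4 : ZMod n) ≠ 0 := by
    have := hcast 4 (by omega) (by omega); simpa using this
  have hnbr : ∀ v : ZMod n, (cycle n).neighborSet v = {v - 1, v + 1} := by
    intro v
    ext w
    simp only [cycle, SimpleGraph.neighborSet, SimpleGraph.fromRel_adj, Set.mem_setOf_eq,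
      Set.mem_insert_iff, Set.mem_singleton_iff]
    constructor
    · rintro ⟨-, h | h⟩
      · left; linear_combination -h
      · right; linear_combination h
    · rintro (rfl | rfl)
      · exact ⟨fun h => h1 (by linear_combination h), Or.inl (by ring)⟩
      · exact ⟨fun h => h1 (by linear_combination -h), Or.inr (by ring)⟩
  have hpair : ∀ v : ZMod n, v - 1 ≠ v + 1 := by
    intro v h; exact h2 (by linear_combination -h)
  have henc : ∀ v : ZMod n, ((cycle n).neighborSet v).encard = 2 := by
    intro v; rw [hnbr v]; exact Set.encard_pair (hpair v)
  have key : ∀ (S : Set (ZMod n)) (a b : ZMod n), a ≠ b → a ∈ S → b ∈ S → 2 ≤ S.encard := by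
    intro S a b hab ha hb
    calc (2 : ℕ∞) = ({a, b} : Set (ZMod n)).encard := (Set.encard_pair hab).symm
      _ ≤ S.encard := Set.encard_le_encard (by simp [Set.insert_subset_iff, ha, hb])
  have hdist : ∀ u v : ZMod n, u ≠ v →
      2 ≤ ((cycle n).neighborSet u ∆ (cycle n).neighborSet v).encard := by
    intro u v huv
    rw [hnbr u, hnbr v]
    by_cases hA : u = v - 2
    · -- u - 1 ∈ Nu \ Nv, v + 1 ∈ Nv \ Nu
      refine key _ (u - 1) (v + 1) ?_ ?_ ?_
      · intro h; exact h4 (by linear_combination hA - h)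
      · rw [Set.mem_symmDiff]
        refine Or.inl ⟨by simp, ?_⟩
        simp only [Set.mem_insert_iff, Set.mem_singleton_iff]
        rintro (h | h)
        · exact huv (by linear_combination h)
        · exact h4 (by linear_combination hA - h)
      · rw [Set.mem_symmDiff]
        refine Or.inr ⟨by simp, ?_⟩
        simp only [Set.mem_insert_iff, Set.mem_singleton_iff]
        rintro (h | h)
        · exact h4 (by linear_combination hA + h)
        · exact huv (by linear_combination -h)
    · by_cases hB : u = v + 2
      · -- u + 1 ∈ Nu \ Nv, v - 1 ∈ Nv \ Nu
        refine key _ (u + 1) (v - 1) ?_ ?_ ?_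
        · intro h; exact h4 (by linear_combination h - hB)
        · rw [Set.mem_symmDiff]
          refine Or.inl ⟨by simp, ?_⟩
          simp only [Set.mem_insert_iff, Set.mem_singleton_iff]
          rintro (h | h)
          · exact h4 (by linear_combination h - hB)
          · exact huv (by linear_combination h)
        · rw [Set.mem_symmDiff]
          refine Or.inr ⟨by simp, ?_⟩
          simp only [Set.mem_insert_iff, Set.mem_singleton_iff]
          rintro (h | h)
          · exact huv (by linear_combination -h)
          · exact hA (by linear_combination -h)
      · -- both u - 1 and u + 1 are in Nu \ Nv
        refine key _ (u - 1) (u + 1) (hpair u) ?_ ?_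
        · rw [Set.mem_symmDiff]
          refine Or.inl ⟨by simp, ?_⟩
          simp only [Set.mem_insert_iff, Set.mem_singleton_iff]
          rintro (h | h)
          · exact huv (by linear_combination h)
          · exact hB (by linear_combination h)
        · rw [Set.mem_symmDiff]
          refine Or.inl ⟨by simp, ?_⟩
          simp only [Set.mem_insert_iff, Set.mem_singleton_iff]
          rintro (h | h)
          · exact hA (by linear_combination h)
          · exact huv (by linear_combination h)
  refine ⟨henc, hdist, ?_, ?_⟩
  · intro v; simp only [Set.inter_univ]; rw [henc v]
  · intro u v huv; simp only [Set.inter_univ]; exact hdist u v huv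
end
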